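/- Let A be a finite d-regular λ-expander and f : A → {0,1} with |E_a[(−1)^{f(a)}]| ≤ √λ. With h_k as the expectation over k-step walks from a of (−1)^{⊕f(a_i)}, the second moment satisfies E_a[h_k(a)²] ≤ (4λ)^{k−1} for all k ≥ 1. -/

import Mathlib

open Finset

noncomputable def expec {V : Type*} [Fintype V] (f : V → ℝ) : ℝ :=
  (∑ a, f a) / (Fintype.card V : ℝ)

noncomputable def sdev {V : Type*} [Fintype V] (f : V → ℝ) : ℝ :=
  Real.sqrt (expec (fun a => f a ^ 2) - (expec f) ^ 2)

noncomputable def edgeE {V : Type*} [Fintype V] {d : ℕ} (N : V → Fin d → V)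
    (F : V → V → ℝ) : ℝ :=
  (∑ a, ∑ i, F a (N a i)) / ((Fintype.card V : ℝ) * d)

/-- `A` is a `lam`-expander in the mixing-lemma sense. -/
def IsExpander {V : Type*} [Fintype V] {d : ℕ} (N : V → Fin d → V) (lam : ℝ) : Prop :=
  ∀ f g : V → ℝ,
    |edgeE N (fun a a' => f a * g a') - expec f * expec g| ≤ lam * sdev f * sdev g

/-- The graph given by the rotation map `N` is undirected (the edge multiset is symmetric). -/
def SymmGraph {V : Type*} [Fintype V] {d : ℕ} (N : V → Fin d → V) : Prop :=
  ∀ F : V → V → ℝ, (∑ a, ∑ i, F a (N a i)) = ∑ a, ∑ i, F (N a i) a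

noncomputable def hWalk {V : Type*} {d : ℕ} (N : V → Fin d → V) (f : V → Bool) :
    ℕ → V → ℝ
  | 0, _ => 1
  | k + 1, a => (if f a then (-1 : ℝ) else 1) * ((∑ i, hWalk N f k (N a i)) / d)

/-!
Write `P` for the walk average, so that `h_{k+1} = χ · P h_k` with `χ = (-1)^f`. Since the graph
is undirected, `E[P g] = E[g]`, and the mixing lemma applied to `(P g, g)` gives
`σ(P g) ≤ λ σ(g)`, hence `E[(P g)²] ≤ λ² E[g²] + E[g]²`. Applied to `(χ, g)` it gives
`|E[χ · P g]| ≤ √λ |E[g]| + λ √E[g²]`. Inducting on both bounds together yields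
`E[h_{m+1}²] ≤ (4λ)^m` and `|E[h_{m+1}]| ≤ √λ (2√λ)^m` when `λ² + λ ≤ 4λ`, i.e. `λ ≤ 3`; for larger
`λ` the claim follows from `|h_k| ≤ 1`.
-/

section Expectation

variable {V : Type*} [Fintype V]

lemma expec_const [Nonempty V] (c : ℝ) : expec (fun _ : V => c) = c := by
  have : (Fintype.card V : ℝ) ≠ 0 := by positivity
  simp [expec, this]

lemma expec_le_of_forall_le [Nonempty V] {g : V → ℝ} {c : ℝ} (h : ∀ a, g a ≤ c) :
    expec g ≤ c := by
  have hn : (0 : ℝ) < Fintype.card V := by positivity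
  rw [expec, div_le_iff₀ hn]
  calc ∑ a, g a ≤ ∑ _a : V, c := sum_le_sum fun a _ => h a
    _ = c * Fintype.card V := by simp [mul_comm]

lemma sq_expec_le_expec_sq (g : V → ℝ) : expec g ^ 2 ≤ expec (fun a => g a ^ 2) := by
  rcases isEmpty_or_nonempty V with hV | hV
  · simp [expec]
  have hn : (0 : ℝ) < Fintype.card V := by positivity
  have hcs : (∑ a, g a) ^ 2 ≤ Fintype.card V * ∑ a, g a ^ 2 := by
    simpa using sq_sum_le_card_mul_sum_sq (s := (univ : Finset V)) (f := g)
  rw [expec, expec, div_pow, div_le_div_iff₀ (by positivity) hn]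
  nlinarith

lemma sdev_sq (g : V → ℝ) : sdev g ^ 2 = expec (fun a => g a ^ 2) - expec g ^ 2 :=
  Real.sq_sqrt (sub_nonneg.2 (sq_expec_le_expec_sq g))

lemma sdev_nonneg (g : V → ℝ) : 0 ≤ sdev g := Real.sqrt_nonneg _

lemma sdev_le_sqrt_expec_sq (g : V → ℝ) : sdev g ≤ √(expec fun a => g a ^ 2) :=
  Real.sqrt_le_sqrt (by linarith [sq_nonneg (expec g)])

end Expectation

section WalkAverage

variable {V : Type*} {d : ℕ} {N : V → Fin d → V}

noncomputable def walkAvg (N : V → Fin d → V) (g : V → ℝ) (a : V) : ℝ := (∑ i, g (N a i)) / d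

def boolSign (b : Bool) : ℝ := if b then -1 else 1

lemma boolSign_sq (b : Bool) : boolSign b ^ 2 = 1 := by
  cases b <;> norm_num [boolSign]

lemma abs_boolSign (b : Bool) : |boolSign b| = 1 := by
  cases b <;> norm_num [boolSign]

lemma hWalk_succ (f : V → Bool) (k : ℕ) (a : V) :
    hWalk N f (k + 1) a = boolSign (f a) * walkAvg N (hWalk N f k) a := rfl

lemma walkAvg_const (hd : 0 < d) (c : ℝ) (a : V) : walkAvg N (fun _ => c) a = c := by
  have : (d : ℝ) ≠ 0 := by positivity
  simp [walkAvg, this]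

lemma abs_walkAvg_le_one (hd : 0 < d) {g : V → ℝ} (hg : ∀ a, |g a| ≤ 1) (a : V) :
    |walkAvg N g a| ≤ 1 := by
  have hd' : (0 : ℝ) < d := by positivity
  rw [walkAvg, abs_div, abs_of_pos hd', div_le_one hd']
  calc |∑ i, g (N a i)| ≤ ∑ i, |g (N a i)| := abs_sum_le_sum_abs _ _
    _ ≤ ∑ _i : Fin d, (1 : ℝ) := sum_le_sum fun i _ => hg (N a i)
    _ = d := by simp

lemma hWalk_one (hd : 0 < d) (f : V → Bool) (a : V) : hWalk N f 1 a = boolSign (f a) := by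
  rw [hWalk_succ]
  exact (congrArg _ (walkAvg_const hd 1 a)).trans (mul_one _)

lemma abs_hWalk_le_one (hd : 0 < d) (f : V → Bool) (k : ℕ) (a : V) : |hWalk N f k a| ≤ 1 := by
  induction k generalizing a with
  | zero => simp [hWalk]
  | succ k ih =>
    rw [hWalk_succ, abs_mul, abs_boolSign, one_mul]
    exact abs_walkAvg_le_one hd ih a

end WalkAverage

section Mixing

variable {V : Type*} [Fintype V] {d : ℕ} {N : V → Fin d → V} {lam : ℝ}

lemma edgeE_mul (g h : V → ℝ) :
    edgeE N (fun a a' => g a * h a') = expec (fun a => g a * walkAvg N h a) := by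
  simp only [edgeE, expec, walkAvg, mul_div_assoc', mul_sum, ← sum_div, div_div, mul_comm]

lemma expec_walkAvg (hd : 0 < d) (hsymm : SymmGraph N) (g : V → ℝ) :
    expec (walkAvg N g) = expec g := by
  have hd' : (d : ℝ) ≠ 0 := by positivity
  have hreverse : ∑ a, ∑ i, g (N a i) = d * ∑ a, g a := by
    simpa [mul_sum] using hsymm fun _ b => g b
  simp only [expec, walkAvg, ← sum_div, hreverse, mul_div_cancel_left₀ _ hd']

lemma sdev_walkAvg_le (hd : 0 < d) (hlam : 0 ≤ lam) (hexp : IsExpander N lam)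
    (hsymm : SymmGraph N) (g : V → ℝ) : sdev (walkAvg N g) ≤ lam * sdev g := by
  have hmix := hexp (walkAvg N g) g
  rw [edgeE_mul, expec_walkAvg hd hsymm] at hmix
  have hvar : sdev (walkAvg N g) ^ 2 ≤ lam * sdev (walkAvg N g) * sdev g := by
    rw [sdev_sq, expec_walkAvg hd hsymm]
    simpa only [sq] using (le_abs_self _).trans hmix
  rcases (sdev_nonneg (walkAvg N g)).eq_or_lt with h0 | hpos
  · rw [← h0]; exact mul_nonneg hlam (sdev_nonneg g)
  · nlinarith

lemma expec_sq_walkAvg_le (hd : 0 < d) (hlam : 0 ≤ lam) (hexp : IsExpander N lam)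
    (hsymm : SymmGraph N) (g : V → ℝ) :
    expec (fun a => walkAvg N g a ^ 2) ≤ lam ^ 2 * expec (fun a => g a ^ 2) + expec g ^ 2 := by
  have hP := sdev_walkAvg_le hd hlam hexp hsymm g
  have hvar : expec (fun a => walkAvg N g a ^ 2) = sdev (walkAvg N g) ^ 2 + expec g ^ 2 := by
    rw [sdev_sq, expec_walkAvg hd hsymm]; ring
  have hg : sdev g ^ 2 ≤ expec (fun a => g a ^ 2) := by
    rw [sdev_sq]; linarith [sq_nonneg (expec g)]
  rw [hvar]
  nlinarith [pow_le_pow_left₀ (sdev_nonneg _) hP 2, sq_nonneg lam]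

end Mixing

section WalkXor

variable {V : Type*} [Fintype V] {d : ℕ} {N : V → Fin d → V} {lam : ℝ}
  {f : V → Bool}

lemma expec_sq_hWalk_succ_le (hd : 0 < d) (hlam : 0 ≤ lam) (hexp : IsExpander N lam)
    (hsymm : SymmGraph N) (k : ℕ) :
    expec (fun a => hWalk N f (k + 1) a ^ 2) ≤
      lam ^ 2 * expec (fun a => hWalk N f k a ^ 2) + expec (hWalk N f k) ^ 2 := by
  simpa only [hWalk_succ, mul_pow, boolSign_sq, one_mul]
    using expec_sq_walkAvg_le hd hlam hexp hsymm (hWalk N f k)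

lemma expec_sq_boolSign [Nonempty V] (f : V → Bool) :
    expec (fun a => boolSign (f a) ^ 2) = 1 := by
  simp only [boolSign_sq, expec_const]

lemma abs_expec_hWalk_succ_le [Nonempty V] (hlam : 0 ≤ lam) (hexp : IsExpander N lam)
    (hbias : |expec (fun a => boolSign (f a))| ≤ √lam) (k : ℕ) :
    |expec (hWalk N f (k + 1))| ≤
      √lam * |expec (hWalk N f k)| + lam * √(expec fun a => hWalk N f k a ^ 2) := by
  have hmix := hexp (fun a => boolSign (f a)) (hWalk N f k)
  rw [edgeE_mul] at hmix
  have hsign : sdev (fun a => boolSign (f a)) ≤ 1 := by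
    simpa [expec_sq_boolSign] using sdev_le_sqrt_expec_sq fun a => boolSign (f a)
  have hprod : |expec (fun a => boolSign (f a)) * expec (hWalk N f k)| ≤
      √lam * |expec (hWalk N f k)| := by
    rw [abs_mul]; exact mul_le_mul_of_nonneg_right hbias (abs_nonneg _)
  have hdev : lam * sdev (fun a => boolSign (f a)) * sdev (hWalk N f k) ≤
      lam * √(expec fun a => hWalk N f k a ^ 2) := by
    rw [mul_assoc]
    refine mul_le_mul_of_nonneg_left ?_ hlam
    calc _ ≤ 1 * sdev (hWalk N f k) := mul_le_mul_of_nonneg_right hsign (sdev_nonneg _)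
      _ ≤ _ := by rw [one_mul]; exact sdev_le_sqrt_expec_sq _
  have htri := abs_sub_abs_le_abs_sub (expec (hWalk N f (k + 1)))
    (expec (fun a => boolSign (f a)) * expec (hWalk N f k))
  have hunfold : expec (hWalk N f (k + 1)) =
      expec (fun a => boolSign (f a) * walkAvg N (hWalk N f k) a) := rfl
  rw [hunfold] at htri ⊢
  linarith

lemma expec_sq_hWalk_le_one [Nonempty V] (hd : 0 < d) (k : ℕ) :
    expec (fun a => hWalk N f k a ^ 2) ≤ 1 :=
  expec_le_of_forall_le fun a => by
    simpa only [sq_abs, one_pow] using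
      pow_le_pow_left₀ (abs_nonneg _) (abs_hWalk_le_one hd f k a) 2

lemma hWalk_moments_le [Nonempty V] (hd : 0 < d) (hlam : 0 ≤ lam) (hlam3 : lam ≤ 3)
    (hexp : IsExpander N lam) (hsymm : SymmGraph N)
    (hbias : |expec (fun a => boolSign (f a))| ≤ √lam) (m : ℕ) :
    expec (fun a => hWalk N f (m + 1) a ^ 2) ≤ ((2 * √lam) ^ m) ^ 2 ∧
      |expec (hWalk N f (m + 1))| ≤ √lam * (2 * √lam) ^ m := by
  have hss : √lam ^ 2 = lam := Real.sq_sqrt hlam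
  induction m with
  | zero =>
    have h1 : hWalk N f 1 = fun a => boolSign (f a) := funext (hWalk_one hd f)
    simpa only [h1, expec_sq_boolSign, pow_zero, one_pow, mul_one, le_refl, true_and] using hbias
  | succ m ih =>
    obtain ⟨ihsq, ihabs⟩ := ih
    set q := (2 * √lam) ^ m
    have hq : 0 ≤ q := by positivity
    have hroot : √(expec fun a => hWalk N f (m + 1) a ^ 2) ≤ q := (Real.sqrt_le_left hq).2 ihsq
    have hmean_sq : expec (hWalk N f (m + 1)) ^ 2 ≤ lam * q ^ 2 := by
      rw [← sq_abs, ← hss, ← mul_pow]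
      exact pow_le_pow_left₀ (abs_nonneg _) ihabs 2
    rw [pow_succ]
    constructor
    · calc _ ≤ lam ^ 2 * expec (fun a => hWalk N f (m + 1) a ^ 2)
              + expec (hWalk N f (m + 1)) ^ 2 := expec_sq_hWalk_succ_le hd hlam hexp hsymm (m + 1)
        _ ≤ lam ^ 2 * q ^ 2 + lam * q ^ 2 := by gcongr
        _ ≤ (q * (2 * √lam)) ^ 2 := by rw [mul_pow, mul_pow, hss]; nlinarith [sq_nonneg q]
    · calc _ ≤ √lam * |expec (hWalk N f (m + 1))|
              + lam * √(expec fun a => hWalk N f (m + 1) a ^ 2) :=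
            abs_expec_hWalk_succ_le hlam hexp hbias (m + 1)
        _ ≤ √lam * (√lam * q) + lam * q := by gcongr
        _ = √lam * (q * (2 * √lam)) := by linear_combination (-q) * hss

end WalkXor

theorem stmt3 {V : Type*} [Fintype V] [Nonempty V] {d : ℕ} (hd : 0 < d)
    (N : V → Fin d → V) (lam : ℝ) (hlam : 0 ≤ lam)
    (hexp : IsExpander N lam) (hsymm : SymmGraph N)
    (f : V → Bool)
    (hbias : |expec (fun a => if f a then (-1 : ℝ) else 1)| ≤ Real.sqrt lam) :
    ∀ k : ℕ, 1 ≤ k →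
      expec (fun a => (hWalk N f k a) ^ 2) ≤ (4 * lam) ^ (k - 1) := by
  intro k hk
  obtain ⟨m, rfl⟩ : ∃ m, k = m + 1 := ⟨k - 1, by omega⟩
  rw [Nat.add_sub_cancel]
  rcases le_or_gt lam 3 with hlam3 | hlam_gt
  · have hmoment := (hWalk_moments_le hd hlam hlam3 hexp hsymm hbias m).1
    rwa [← pow_mul, pow_mul', mul_pow, Real.sq_sqrt hlam, show (2 : ℝ) ^ 2 = 4 by norm_num]
      at hmoment
  · exact (expec_sq_hWalk_le_one hd _).trans (one_le_pow₀ (by linarith))
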